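/- Let p ∈ (1/2, 1), η > 0, d > 0 and u(w) = p·Φ((w+ηd)/√d) + (1−p)·Φ((−w+ηd)/√d). Then u is strictly concave in a neighborhood of its maximizer w* = (ln p − ln(1−p))/(2η); more precisely u''(w*) < 0. -/

import Mathlib

/-!
Writing `a = (w + ηd)/√d` and `b = (-w + ηd)/√d`, one has
`u''(w) = -(p·a·φ(a) + (1-p)·b·φ(b))/d`, since `φ' = -x·φ`. The maximizer `w*` is exactly the
point where `a² - b² = 4ηw` equals `2(ln p - ln(1-p))`, i.e. where `p·φ(a) = (1-p)·φ(b)`; there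
`u''(w*) = -(1-p)·φ(b)·(a + b)/d < 0` because `a + b = 2η√d > 0`. Continuity of `u''` then gives
strict concavity on a neighbourhood of `w*`.
-/

noncomputable def stdNormalCDF (x : ℝ) : ℝ :=
  ∫ t in Set.Iic x, (Real.sqrt (2 * Real.pi))⁻¹ * Real.exp (-t ^ 2 / 2)

open MeasureTheory Set Real

noncomputable def stdNormalPDF (x : ℝ) : ℝ := (√(2 * π))⁻¹ * exp (-x ^ 2 / 2)

lemma stdNormalPDF_pos (x : ℝ) : 0 < stdNormalPDF x := by
  unfold stdNormalPDF; positivity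

@[fun_prop]
lemma continuous_stdNormalPDF : Continuous stdNormalPDF := by
  unfold stdNormalPDF; fun_prop

lemma integrable_stdNormalPDF : Integrable stdNormalPDF := by
  have h : stdNormalPDF = fun x => (√(2 * π))⁻¹ * exp (-(1 / 2) * x ^ 2) := by
    funext x
    unfold stdNormalPDF
    ring_nf
  rw [h]
  exact (integrable_exp_neg_mul_sq (by norm_num)).const_mul _

lemma hasDerivAt_stdNormalPDF (x : ℝ) : HasDerivAt stdNormalPDF (-x * stdNormalPDF x) x := by
  have h := (((hasDerivAt_pow 2 x).fun_neg.div_const 2).exp).const_mul (√(2 * π))⁻¹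
  exact h.congr_deriv (by unfold stdNormalPDF; push_cast; ring)

lemma hasDerivAt_integral_Iic {f : ℝ → ℝ} {x : ℝ} (hf : Integrable f) (hfx : ContinuousAt f x) :
    HasDerivAt (fun y => ∫ t in Iic y, f t) (f x) x := by
  have hsplit : (fun y => ∫ t in Iic y, f t) = fun y => (∫ t in Iic 0, f t) + ∫ t in 0..y, f t := by
    funext y
    rw [← intervalIntegral.integral_Iic_sub_Iic hf.integrableOn hf.integrableOn]
    ring
  rw [hsplit]
  exact (intervalIntegral.integral_hasDerivAt_right hf.intervalIntegrable
    (hf.aestronglyMeasurable.stronglyMeasurableAtFilter) hfx).const_add _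

lemma hasDerivAt_stdNormalCDF (x : ℝ) : HasDerivAt stdNormalCDF (stdNormalPDF x) x :=
  hasDerivAt_integral_Iic integrable_stdNormalPDF continuous_stdNormalPDF.continuousAt

lemma hasDerivAt_mul_comp_add_mul_comp_neg {F F' : ℝ → ℝ} (hF : ∀ x, HasDerivAt F (F' x) x)
    (p q c s w : ℝ) :
    HasDerivAt (fun w => p * F ((w + c) / s) + q * F ((-w + c) / s))
      ((p * F' ((w + c) / s) - q * F' ((-w + c) / s)) / s) w := by
  have ha := ((hF _).comp w (((hasDerivAt_id' w).add_const c).div_const s)).const_mul p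
  have hb := ((hF _).comp w (((hasDerivAt_id' w).fun_neg.add_const c).div_const s)).const_mul q
  exact (ha.add hb).congr_deriv (by ring)

lemma deriv_deriv_mul_stdNormalCDF_add_mul_stdNormalCDF_neg {p q c s : ℝ} (hs : s ≠ 0) :
    deriv (deriv fun w => p * stdNormalCDF ((w + c) / s) + q * stdNormalCDF ((-w + c) / s)) =
      fun w => -(p * ((w + c) / s) * stdNormalPDF ((w + c) / s) +
        q * ((-w + c) / s) * stdNormalPDF ((-w + c) / s)) / s ^ 2 := by
  have hderiv : deriv (fun w => p * stdNormalCDF ((w + c) / s) + q * stdNormalCDF ((-w + c) / s)) =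
      fun w => p / s * stdNormalPDF ((w + c) / s) + -q / s * stdNormalPDF ((-w + c) / s) :=
    funext fun w =>
      (hasDerivAt_mul_comp_add_mul_comp_neg hasDerivAt_stdNormalCDF _ _ _ _ w).deriv.trans (by ring)
  funext w
  rw [hderiv, (hasDerivAt_mul_comp_add_mul_comp_neg hasDerivAt_stdNormalPDF _ _ _ _ w).deriv]
  field_simp
  ring

lemma exists_strictConcaveOn_Ioo_of_deriv2_neg {f : ℝ → ℝ} {x₀ : ℝ} (hf : Continuous f)
    (hf'' : ContinuousAt (deriv (deriv f)) x₀) (hneg : deriv (deriv f) x₀ < 0) :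
    ∃ r > 0, StrictConcaveOn ℝ (Ioo (x₀ - r) (x₀ + r)) f := by
  obtain ⟨r, hr, hball⟩ := Metric.eventually_nhds_iff_ball.mp (hf''.eventually (gt_mem_nhds hneg))
  refine ⟨r, hr, strictConcaveOn_of_deriv2_neg' (convex_Ioo _ _) hf.continuousOn fun x hx => ?_⟩
  exact hball x (by rwa [Real.ball_eq_Ioo])

lemma mul_stdNormalPDF_eq_of_sq_sub_sq {p q a b : ℝ} (hp : 0 < p) (hq : 0 < q)
    (h : a ^ 2 - b ^ 2 = 2 * (log p - log q)) : p * stdNormalPDF a = q * stdNormalPDF b := by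
  have hexp : -a ^ 2 / 2 = -b ^ 2 / 2 + (log q - log p) := by linarith
  unfold stdNormalPDF
  rw [hexp, exp_add, exp_sub, exp_log hp, exp_log hq]
  field_simp

lemma mul_mul_stdNormalPDF_add_pos {p q a b : ℝ} (hq : 0 < q) (hab : 0 < a + b)
    (h : p * stdNormalPDF a = q * stdNormalPDF b) :
    0 < p * a * stdNormalPDF a + q * b * stdNormalPDF b := by
  have hsum : p * a * stdNormalPDF a + q * b * stdNormalPDF b = q * stdNormalPDF b * (a + b) := by
    linear_combination a * h
  rw [hsum]
  have := stdNormalPDF_pos b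
  positivity

/-- The expected clean accuracy `u(w) = p·Φ((w+ηd)/√d) + (1−p)·Φ((−w+ηd)/√d)` is strictly
concave in a neighborhood of its maximizer `w* = (ln p − ln(1−p))/(2η)`; more precisely
`u''(w*) < 0`. -/
theorem clean_accuracy_strictly_concave_at_max (p η d : ℝ)
    (hp : p ∈ Set.Ioo (1/2 : ℝ) 1) (hη : 0 < η) (hd : 0 < d) :
    (∃ r > 0, StrictConcaveOn ℝ
      (Set.Ioo ((Real.log p - Real.log (1 - p)) / (2 * η) - r)
        ((Real.log p - Real.log (1 - p)) / (2 * η) + r))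
      (fun w => p * stdNormalCDF ((w + η * d) / Real.sqrt d) +
        (1 - p) * stdNormalCDF ((-w + η * d) / Real.sqrt d))) ∧
    deriv (deriv (fun w => p * stdNormalCDF ((w + η * d) / Real.sqrt d) +
        (1 - p) * stdNormalCDF ((-w + η * d) / Real.sqrt d)))
      ((Real.log p - Real.log (1 - p)) / (2 * η)) < 0 := by
  obtain ⟨hp_half, hp_one⟩ := hp
  have hp0 : 0 < p := by linarith
  have hq0 : 0 < 1 - p := by linarith
  have hu'' := deriv_deriv_mul_stdNormalCDF_add_mul_stdNormalCDF_neg (p := p) (q := 1 - p)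
    (c := η * d) (sqrt_pos.mpr hd).ne'
  rw [sq_sqrt hd.le] at hu''
  set w₀ := (log p - log (1 - p)) / (2 * η)
  have hsq : ((w₀ + η * d) / √d) ^ 2 - ((-w₀ + η * d) / √d) ^ 2 = 2 * (log p - log (1 - p)) := by
    rw [div_pow, div_pow, sq_sqrt hd.le]
    simp only [w₀]
    field_simp
    ring
  have hsum : 0 < (w₀ + η * d) / √d + (-w₀ + η * d) / √d := by
    rw [← add_div, show w₀ + η * d + (-w₀ + η * d) = 2 * η * d by ring]
    positivity
  have hneg : deriv (deriv fun w => p * stdNormalCDF ((w + η * d) / √d) +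
      (1 - p) * stdNormalCDF ((-w + η * d) / √d)) w₀ < 0 := by
    have := mul_mul_stdNormalPDF_add_pos hq0 hsum (mul_stdNormalPDF_eq_of_sq_sub_sq hp0 hq0 hsq)
    rw [hu'']
    exact div_neg_of_neg_of_pos (by linarith) hd
  refine ⟨exists_strictConcaveOn_Ioo_of_deriv2_neg ?_ ?_ hneg, hneg⟩
  · exact continuous_iff_continuousAt.mpr fun w =>
      (hasDerivAt_mul_comp_add_mul_comp_neg hasDerivAt_stdNormalCDF _ _ _ _ w).continuousAt
  · rw [hu'']
    fun_prop
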